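/- Let R be a commutative ring, f_0, ..., f_n a Koszul-regular sequence in R, and d_0, ..., d_n positive integers. Let C^• be the complex of R[t]-modules with C^{-p} = Λ^p(M^{n+1}) where M = (1/(x_0···x_n))·R[t, x_0^{-1}, ..., x_n^{-1}], and differentials induced by the elements f_i - x_i·t^{d_i}, where multiplication by x_i annihilates M's 'top' part so that the induced maps are multiplication by f_i. Then the cohomology of C^• is concentrated in degree 0 and equals (1/(x_0···x_n))·(R/(f_0, ..., f_n))[t, x_0^{-1}, ..., x_n^{-1}]. -/

import Mathlib

set_option maxHeartbeats 1000000
set_option synthInstance.maxHeartbeats 400000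

open TensorProduct

/-- A sequence `f 0, ..., f (k-1)` in a commutative ring `R` is *Koszul-regular* if the
Koszul complex `K_•(f; R)` has vanishing homology in all positive degrees. -/
def IsKoszulRegular {R : Type*} [CommRing R] {k : ℕ} (f : Fin k → R) : Prop :=
  ∀ p : ℕ, 0 < p → ∀ x ∈ ⋀[R]^p (Fin k → R),
    CliffordAlgebra.contractLeft ((Pi.basisFun R (Fin k)).constr R f) x = 0 →
      ∃ y ∈ ⋀[R]^(p + 1) (Fin k → R),
        CliffordAlgebra.contractLeft ((Pi.basisFun R (Fin k)).constr R f) y = x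

/-! Choosing an `R`-basis of `M`, the complex `(⋀ R^{n+1}) ⊗_R M` splits coordinatewise into
copies of the Koszul complex of `f`, so exactness in negative degrees is Koszul-regularity,
and `1 ⊗ m` is a boundary iff every coordinate of `m` lies in `(f)`. The `R[t]`-basis of `M`
then identifies `M / (f)M` with the free `(R/(f))[t]`-module on the same monomials. -/

section FreeCoordinates

variable {R M : Type*} [CommRing R] [AddCommGroup M] [Module R M]
  {A B : Type*} [AddCommGroup A] [Module R A] [AddCommGroup B] [Module R B]

theorem TensorProduct.equivFinsuppOfBasisRight_rTensor {κ : Type*} [DecidableEq κ]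
    (c : Module.Basis κ R M) (g : A →ₗ[R] B) (x : A ⊗[R] M) :
    equivFinsuppOfBasisRight c (g.rTensor M x) =
      (equivFinsuppOfBasisRight c x).mapRange g (map_zero g) := by
  induction x using TensorProduct.induction_on with
  | zero => simp
  | tmul a m => ext k; simp
  | add x y hx hy => ext k; simp [hx, hy]

theorem TensorProduct.mem_range_rTensor_iff {κ : Type*} [DecidableEq κ]
    (c : Module.Basis κ R M) (g : A →ₗ[R] B) (x : B ⊗[R] M) :
    x ∈ LinearMap.range (g.rTensor M) ↔
      ∀ k, equivFinsuppOfBasisRight c x k ∈ LinearMap.range g := by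
  constructor
  · rintro ⟨y, rfl⟩ k
    rw [equivFinsuppOfBasisRight_rTensor]
    exact ⟨_, rfl⟩
  · intro h
    obtain ⟨u, hu⟩ :
        equivFinsuppOfBasisRight c x ∈ Set.range (Finsupp.mapRange g (map_zero g)) := by
      rwa [Finsupp.range_mapRange]
    refine ⟨(equivFinsuppOfBasisRight c).symm u, (equivFinsuppOfBasisRight c).injective ?_⟩
    rw [equivFinsuppOfBasisRight_rTensor, LinearEquiv.apply_symm_apply, hu]

theorem TensorProduct.mem_map_range_rTensor_subtype_iff {κ : Type*} [DecidableEq κ]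
    (c : Module.Basis κ R M) (g : A →ₗ[R] B) (Q : Submodule R A) (x : B ⊗[R] M) :
    x ∈ (LinearMap.range (Q.subtype.rTensor M)).map (g.rTensor M) ↔
      ∀ k, equivFinsuppOfBasisRight c x k ∈ Q.map g := by
  rw [← LinearMap.range_comp, ← LinearMap.rTensor_comp, mem_range_rTensor_iff c,
    LinearMap.range_comp, Submodule.range_subtype]

theorem Module.Basis.mem_ideal_smul_top_iff {κ : Type*} (c : Module.Basis κ R M) (I : Ideal R)
    (m : M) : m ∈ I • (⊤ : Submodule R M) ↔ ∀ k, c.repr m k ∈ I := by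
  constructor
  · intro hm k
    induction hm using Submodule.smul_induction_on' with
    | smul r hr n _ => simpa using I.mul_mem_right _ hr
    | add x _ y _ hx hy => simpa using I.add_mem hx hy
  · intro h
    rw [← c.linearCombination_repr m]
    exact Submodule.sum_mem _ fun k _ => Submodule.smul_mem_smul (h k) trivial

theorem Module.Free.range_rTensor_inf_ker_le [Module.Free R M] (g : A →ₗ[R] A)
    (P Q : Submodule R A) (h : P ⊓ LinearMap.ker g ≤ Q.map g) :
    LinearMap.range (P.subtype.rTensor M) ⊓ LinearMap.ker (g.rTensor M) ≤
      (LinearMap.range (Q.subtype.rTensor M)).map (g.rTensor M) := by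
  classical
  let c := Module.Free.chooseBasis R M
  rintro x ⟨hxP, hx0⟩
  rw [mem_map_range_rTensor_subtype_iff c]
  intro k
  refine h ⟨by simpa using (mem_range_rTensor_iff c P.subtype x).1 hxP k, ?_⟩
  have := congr(equivFinsuppOfBasisRight c $(LinearMap.mem_ker.1 hx0) k)
  rw [equivFinsuppOfBasisRight_rTensor] at this
  simpa using this

end FreeCoordinates

theorem ExteriorAlgebra.algebraMap_mem_map_contractLeft_iff {R V : Type*} [CommRing R]
    [AddCommGroup V] [Module R V] (φ : Module.Dual R V) (r : R) :
    algebraMap R (ExteriorAlgebra R V) r ∈ (⋀[R]^1 V).map (CliffordAlgebra.contractLeft φ) ↔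
      r ∈ LinearMap.range φ := by
  have hmap : (⋀[R]^1 V).map (CliffordAlgebra.contractLeft φ) =
      (LinearMap.range φ).map (Algebra.linearMap R (ExteriorAlgebra R V)) := by
    rw [exteriorPower, pow_one, ← LinearMap.range_comp, ← LinearMap.range_comp]
    congr 1
    ext v
    simp
  rw [hmap, ← SetLike.mem_coe, Submodule.map_coe, Algebra.coe_linearMap,
    (ExteriorAlgebra.algebraMap_leftInverse V).injective.mem_set_image, SetLike.mem_coe]

theorem Polynomial.basisMonomials_repr_apply {R : Type*} [Semiring R] (p : Polynomial R) (n : ℕ) :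
    (basisMonomials R).repr p n = p.coeff n :=
  rfl

noncomputable def Module.Basis.quotSMulTopEquivFinsuppPolynomial {R M κ : Type*} [CommRing R]
    [AddCommGroup M] [Module (Polynomial R) M] [Module R M] [IsScalarTower R (Polynomial R) M]
    (b : Module.Basis κ (Polynomial R) M) (I : Ideal R) :
    (M ⧸ I • (⊤ : Submodule R M)) ≃ₗ[R] κ →₀ Polynomial (R ⧸ I) := by
  let φ : M →ₗ[R] κ →₀ Polynomial (R ⧸ I) :=
    (Finsupp.mapRange.linearMap (Polynomial.mapAlgHom (Ideal.Quotient.mkₐ R I)).toLinearMap) ∘ₗ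
      (b.repr.restrictScalars R).toLinearMap
  have hsurj : Function.Surjective φ :=
    (Finsupp.mapRange_surjective _ (map_zero _)
      (Polynomial.map_surjective _ Ideal.Quotient.mk_surjective)).comp b.repr.surjective
  have hker : LinearMap.ker φ = I • ⊤ := by
    ext m
    rw [((Polynomial.basisMonomials R).smulTower b).mem_ideal_smul_top_iff, Prod.forall,
      forall_comm, LinearMap.mem_ker, Finsupp.ext_iff]
    refine forall_congr' fun a => ?_
    simp [φ, Polynomial.ext_iff, Ideal.Quotient.eq_zero_iff_mem,
      Polynomial.basisMonomials_repr_apply]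
  exact (Submodule.quotEquivOfEq _ _ hker.symm).trans (φ.quotKerEquivOfSurjective hsurj)

/-- `M` is given by its `R[t]`-basis `b` of monomials `x^{-a-1}`, `a : Fin (n+1) → ℕ`, and
`C^{-p}` by `⋀ᵖ R^{n+1} ⊗_R M`: as `x_i` kills the generators of `M`, the differential induced
by `f_i - x_i t^{d_i}` is the Koszul contraction against `f`, tensored with `M`. -/
theorem koszul_negative_monomials_resolution_general {R : Type*} [CommRing R] {n : ℕ}
    (f : Fin (n + 1) → R)
    (hf : IsKoszulRegular f)
    (M : Type*) [AddCommGroup M] [Module (Polynomial R) M] [Module R M]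
    [IsScalarTower R (Polynomial R) M]
    (b : Module.Basis (Fin (n + 1) → ℕ) (Polynomial R) M) :
    (∀ p : ℕ, 0 < p →
      ∀ x ∈ LinearMap.range
          (LinearMap.rTensor M (⋀[R]^p (Fin (n + 1) → R)).subtype),
        LinearMap.rTensor M
            (CliffordAlgebra.contractLeft ((Pi.basisFun R (Fin (n + 1))).constr R f)) x
          = 0 →
        ∃ y ∈ LinearMap.range
            (LinearMap.rTensor M (⋀[R]^(p + 1) (Fin (n + 1) → R)).subtype),
          LinearMap.rTensor M
              (CliffordAlgebra.contractLeft ((Pi.basisFun R (Fin (n + 1))).constr R f)) y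
            = x) ∧
    (∀ m : M,
      (∃ y ∈ LinearMap.range
          (LinearMap.rTensor M (⋀[R]^1 (Fin (n + 1) → R)).subtype),
        LinearMap.rTensor M
            (CliffordAlgebra.contractLeft ((Pi.basisFun R (Fin (n + 1))).constr R f)) y
          = (1 : ExteriorAlgebra R (Fin (n + 1) → R)) ⊗ₜ[R] m) ↔
      m ∈ Ideal.span (Set.range f) • (⊤ : Submodule R M)) ∧
    Nonempty
      ((M ⧸ (Ideal.span (Set.range f) • (⊤ : Submodule R M))) ≃ₗ[R]
        ((Fin (n + 1) → ℕ) →₀ Polynomial (R ⧸ Ideal.span (Set.range f)))) := by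
  classical
  let c := (Polynomial.basisMonomials R).smulTower b
  have : Module.Free R M := .of_basis c
  refine ⟨fun p hp x hx hx0 => ?_, fun m => ?_, ⟨b.quotSMulTopEquivFinsuppPolynomial _⟩⟩
  · exact Module.Free.range_rTensor_inf_ker_le _ _ _
      (fun y ⟨hy, hy0⟩ => hf p hp y hy hy0) ⟨hx, hx0⟩
  · rw [← Submodule.mem_map, mem_map_range_rTensor_subtype_iff c, c.mem_ideal_smul_top_iff]
    refine forall_congr' fun k => ?_
    rw [equivFinsuppOfBasisRight_apply_tmul_apply, ← Algebra.algebraMap_eq_smul_one,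
      ExteriorAlgebra.algebraMap_mem_map_contractLeft_iff, Module.Basis.constr_range]

/-- Let `f_0, ..., f_n` be Koszul-regular in `R` and `d_i ≥ 1`.  Let
`M = (1/(x_0⋯x_n))·R[t, x_0⁻¹, ..., x_n⁻¹]` be the free `R[t]`-module on the monomials
`x_0^{-a_0-1}⋯x_n^{-a_n-1}` (encoded by a basis `b` indexed by exponent vectors
`a : Fin (n+1) → ℕ`), and let `C^•` be the complex with `C^{-p} = Λᵖ(M^{n+1})` and
differentials induced by the elements `f_i - x_i·t^{d_i}`.  Since multiplication by `x_i`
annihilates the top part of `M`, the differential acts as the Koszul differential of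
`f_0, ..., f_n` tensored (over `R`) with the free `R`-module `M`; we realize `C^•` inside
`(⋀ R^{n+1}) ⊗_R M` with differential the contraction against `f` tensored with `M`.
Then the cohomology of `C^•` is concentrated in degree `0`, where it equals
`(1/(x_0⋯x_n))·(R/(f_0, ..., f_n))[t, x_0⁻¹, ..., x_n⁻¹]`: the complex is exact in
negative degrees, `1 ⊗ m` is a boundary iff `m ∈ (f)·M`, and `M/(f)·M` is the free
`(R/(f))[t]`-module on the same monomials. -/
theorem koszul_negative_monomials_resolution {R : Type*} [CommRing R] {n : ℕ}
    (f : Fin (n + 1) → R) (d : Fin (n + 1) → ℕ) (hd : ∀ i, 1 ≤ d i)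
    (hf : IsKoszulRegular f)
    (M : Type*) [AddCommGroup M] [Module (Polynomial R) M] [Module R M]
    [IsScalarTower R (Polynomial R) M]
    (b : Module.Basis (Fin (n + 1) → ℕ) (Polynomial R) M) :
    (∀ p : ℕ, 0 < p →
      ∀ x ∈ LinearMap.range
          (LinearMap.rTensor M (⋀[R]^p (Fin (n + 1) → R)).subtype),
        LinearMap.rTensor M
            (CliffordAlgebra.contractLeft ((Pi.basisFun R (Fin (n + 1))).constr R f)) x
          = 0 →
        ∃ y ∈ LinearMap.range
            (LinearMap.rTensor M (⋀[R]^(p + 1) (Fin (n + 1) → R)).subtype),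
          LinearMap.rTensor M
              (CliffordAlgebra.contractLeft ((Pi.basisFun R (Fin (n + 1))).constr R f)) y
            = x) ∧
    (∀ m : M,
      (∃ y ∈ LinearMap.range
          (LinearMap.rTensor M (⋀[R]^1 (Fin (n + 1) → R)).subtype),
        LinearMap.rTensor M
            (CliffordAlgebra.contractLeft ((Pi.basisFun R (Fin (n + 1))).constr R f)) y
          = (1 : ExteriorAlgebra R (Fin (n + 1) → R)) ⊗ₜ[R] m) ↔
      m ∈ Ideal.span (Set.range f) • (⊤ : Submodule R M)) ∧
    Nonempty
      ((M ⧸ (Ideal.span (Set.range f) • (⊤ : Submodule R M))) ≃ₗ[R]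
        ((Fin (n + 1) → ℕ) →₀ Polynomial (R ⧸ Ideal.span (Set.range f)))) :=
  koszul_negative_monomials_resolution_general f hf M b
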